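/- Let $(S_n)$ be an irreducible recurrent Markov chain on a countable set $\Sigma$. For $x\in\Sigma$ let $\kappa(x)=\sup\{\alpha>0:\mathbb{E}_x[e^{\alpha\tau(x)}]<\infty\}$ with $\tau(x)$ the first return time to $x$, and for bounded $f$ with $\|f\|_\infty<\kappa(x)$ let $c(x,f)=\lim_n \frac1n\log\mathbb{E}_x[e^{\sum_{i=0}^{n-1}f(S_i)}]$. If $\|f\|_\infty < \frac12\inf(\kappa(x),\kappa(y))$, then $c(x,f) = c(y,f)$. -/

import Mathlib

/-!
If the chain started at `x` follows, up to some time `p`, a path `γ` of positive probability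
ending at `y`, then on that event the additive functional `A_p` is the constant `A_p(γ)`, and the
Markov property at time `p` gives
`E_x[e^{A_{p+n}}] ≥ e^{A_p(γ)} P_x(S_i = γ_i, i ≤ p) E_y[e^{A_n}]`.
Taking `(1/n) log` yields `c(x,f) ≥ c(y,f)`, and irreducibility gives the reverse inequality.
-/

open MeasureTheory Filter Real Topology Set
open scoped ENNReal

lemma le_of_tendsto_log_div_of_mul_le {a b : ℕ → ℝ} {C s t : ℝ} {p : ℕ} (hC : 0 < C)
    (hb : ∀ n, 0 < b n) (hab : ∀ n, C * b n ≤ a (p + n))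
    (ha : Tendsto (fun n : ℕ => 1 / (n : ℝ) * log (a n)) atTop (𝓝 s))
    (hb' : Tendsto (fun n : ℕ => 1 / (n : ℝ) * log (b n)) atTop (𝓝 t)) : t ≤ s := by
  have ha' : Tendsto (fun n : ℕ => 1 / ((p + n : ℕ) : ℝ) * log (a (p + n))) atTop (𝓝 s) :=
    ha.comp ((tendsto_add_atTop_nat p).congr fun n => Nat.add_comm n p)
  have hlower : Tendsto (fun n : ℕ => log C / (n + p) + n / (n + p) * (1 / n * log (b n)))
      atTop (𝓝 t) := by
    have hinv : Tendsto (fun n : ℕ => log C / ((n : ℝ) + p)) atTop (𝓝 0) :=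
      tendsto_const_nhds.div_atTop (tendsto_atTop_add_const_right _ _ tendsto_natCast_atTop_atTop)
    simpa using hinv.add ((tendsto_natCast_div_add_atTop (p : ℝ)).mul hb')
  refine le_of_tendsto_of_tendsto hlower ha' ?_
  filter_upwards [eventually_ne_atTop 0] with n hn
  have hlog : log (C * b n) ≤ log (a (p + n)) := log_le_log (mul_pos hC (hb n)) (hab n)
  rw [log_mul hC.ne' (hb n).ne'] at hlog
  have hn' : (n : ℝ) ≠ 0 := Nat.cast_ne_zero.2 hn
  calc log C / (n + p) + n / (n + p) * (1 / n * log (b n))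
      = 1 / ((p + n : ℕ) : ℝ) * (log C + log (b n)) := by
        push_cast
        field_simp
        ring
    _ ≤ 1 / ((p + n : ℕ) : ℝ) * log (a (p + n)) := by gcongr

section PathCylinder

variable {α : Type*}

def pathCylinder (γ : ℕ → α) (n : ℕ) : Set (ℕ → α) := {ω | ∀ i ≤ n, ω i = γ i}

def pathShift (p : ℕ) (ω : ℕ → α) : ℕ → α := fun i => ω (p + i)

def pathAppend (γ : ℕ → α) (p : ℕ) (δ : ℕ → α) : ℕ → α :=
  fun i => if i ≤ p then γ i else δ (i - p)

lemma pathCylinder_congr {γ δ : ℕ → α} {n : ℕ} (h : ∀ i ≤ n, γ i = δ i) :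
    pathCylinder γ n = pathCylinder δ n := by
  ext ω
  exact forall₂_congr fun i hi => by rw [h i hi]

lemma pathCylinder_zero (γ : ℕ → α) : pathCylinder γ 0 = {ω | ω 0 = γ 0} := by
  ext ω
  simp [pathCylinder]

lemma pathCylinder_anti (γ : ℕ → α) {m n : ℕ} (hmn : m ≤ n) :
    pathCylinder γ n ⊆ pathCylinder γ m :=
  fun _ hω i hi => hω i (hi.trans hmn)

lemma pathCylinder_inter_eq_of_le {γ δ : ℕ → α} {m n : ℕ} (hmn : m ≤ n)
    (h : (pathCylinder γ m ∩ pathCylinder δ n).Nonempty) :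
    pathCylinder γ m ∩ pathCylinder δ n = pathCylinder δ n := by
  obtain ⟨ω₀, hγ, hδ⟩ := h
  refine inter_eq_right.2 fun ω hω i hi => ?_
  rw [hω i (hi.trans hmn), ← hδ i (hi.trans hmn), hγ i hi]

lemma isPiSystem_pathCylinders :
    IsPiSystem {S : Set (ℕ → α) | ∃ γ n, S = pathCylinder γ n} := by
  rintro _ ⟨γ, m, rfl⟩ _ ⟨δ, n, rfl⟩ hne
  rcases le_total m n with hmn | hnm
  · exact ⟨δ, n, pathCylinder_inter_eq_of_le hmn hne⟩
  · rw [inter_comm] at hne ⊢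
    exact ⟨γ, m, pathCylinder_inter_eq_of_le hnm hne⟩

lemma setOf_apply_eq_iUnion_pathCylinder (i : ℕ) (a : α) :
    {ω : ℕ → α | ω i = a}
      = ⋃ v : Fin i → α, pathCylinder (fun k => if h : k < i then v ⟨k, h⟩ else a) i := by
  ext ω
  simp only [mem_ofPred_eq, mem_iUnion, pathCylinder]
  constructor
  · intro hω
    refine ⟨fun k => ω k, fun j hj => ?_⟩
    rcases hj.lt_or_eq with hj | rfl
    · simp [hj]
    · simp [hω]
  · rintro ⟨v, hv⟩
    simpa using hv i le_rfl

lemma pathShift_preimage_pathCylinder_inter {γ δ : ℕ → α} {p m : ℕ} (h : δ 0 = γ p) :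
    pathShift p ⁻¹' pathCylinder δ m ∩ pathCylinder γ p
      = pathCylinder (pathAppend γ p δ) (p + m) := by
  ext ω
  simp only [mem_inter_iff, mem_preimage, pathCylinder, pathShift, pathAppend, mem_ofPred_eq]
  constructor
  · rintro ⟨hδ, hγ⟩ i hi
    split_ifs with hip
    · exact hγ i hip
    · simpa [Nat.add_sub_cancel' (le_of_not_ge hip)] using hδ (i - p) (by omega)
  · intro hω
    refine ⟨fun i hi => ?_, fun i hi => by simpa [hi] using hω i (by omega)⟩
    rcases Nat.eq_zero_or_pos i with rfl | hi0
    · simpa [h] using hω p (by omega)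
    · simpa [show ¬ p + i ≤ p by omega] using hω (p + i) (by omega)

lemma pathShift_preimage_pathCylinder_inter_eq_empty {γ δ : ℕ → α} {p m : ℕ} (h : δ 0 ≠ γ p) :
    pathShift p ⁻¹' pathCylinder δ m ∩ pathCylinder γ p = ∅ := by
  refine eq_empty_of_forall_notMem fun ω ⟨hδ, hγ⟩ => h ?_
  rw [← hδ 0 (Nat.zero_le m), ← hγ p le_rfl]
  rfl

variable [MeasurableSpace α]

lemma measurable_pathShift (p : ℕ) : Measurable (pathShift (α := α) p) :=
  measurable_pi_lambda _ fun i => measurable_pi_apply (p + i)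

lemma measurableSet_pathCylinder [MeasurableSingletonClass α] (γ : ℕ → α) (n : ℕ) :
    MeasurableSet (pathCylinder γ n) := by
  simp only [pathCylinder, ofPred_forall]
  exact .iInter fun i => .iInter fun _ => measurable_pi_apply i (measurableSet_singleton _)

lemma generateFrom_pathCylinders [Countable α] [MeasurableSingletonClass α] :
    MeasurableSpace.generateFrom {S : Set (ℕ → α) | ∃ γ n, S = pathCylinder γ n}
      = MeasurableSpace.pi := by
  refine le_antisymm (MeasurableSpace.generateFrom_le ?_) (iSup_le fun i => ?_)
  · rintro _ ⟨γ, n, rfl⟩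
    exact measurableSet_pathCylinder γ n
  · refine measurable_iff_comap_le.1 (@measurable_to_countable' _ _ _ _ (_) _ fun a => ?_)
    simp only [preimage, mem_singleton_iff]
    rw [setOf_apply_eq_iUnion_pathCylinder]
    exact .iUnion fun v => MeasurableSpace.measurableSet_generateFrom ⟨_, i, rfl⟩

lemma exists_pathCylinder_measure_ne_zero [Countable α] (μ : Measure (ℕ → α)) {i : ℕ} {a : α}
    (h : μ {ω | ω i = a} ≠ 0) : ∃ γ, γ i = a ∧ μ (pathCylinder γ i) ≠ 0 := by
  rw [setOf_apply_eq_iUnion_pathCylinder, Ne, measure_iUnion_null_iff, not_forall] at h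
  obtain ⟨v, hv⟩ := h
  exact ⟨_, by simp, hv⟩

end PathCylinder

section PathSum

variable {α : Type*}

def pathSum (f : α → ℝ) (n : ℕ) (ω : ℕ → α) : ℝ := ∑ i ∈ Finset.range n, f (ω i)

lemma pathSum_add (f : α → ℝ) (p n : ℕ) (ω : ℕ → α) :
    pathSum f (p + n) ω = pathSum f p ω + pathSum f n (pathShift p ω) :=
  Finset.sum_range_add _ p n

lemma pathSum_eq_of_mem_pathCylinder (f : α → ℝ) {γ ω : ℕ → α} {p : ℕ}
    (hω : ω ∈ pathCylinder γ p) : pathSum f p ω = pathSum f p γ :=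
  Finset.sum_congr rfl fun i hi => by rw [hω i (Finset.mem_range.1 hi).le]

lemma pathSum_le {f : α → ℝ} {M : ℝ} (hM : ∀ z, f z ≤ M) (n : ℕ) (ω : ℕ → α) :
    pathSum f n ω ≤ n * M := by
  simpa [pathSum] using
    Finset.sum_le_card_nsmul (Finset.range n) (fun i => f (ω i)) M fun i _ => hM (ω i)

variable [MeasurableSpace α] [Countable α] [MeasurableSingletonClass α]

lemma measurable_pathSum (f : α → ℝ) (n : ℕ) : Measurable (pathSum f n) :=
  Finset.measurable_sum _ fun i _ => (measurable_of_countable f).comp (measurable_pi_apply i)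

lemma integrable_exp_pathSum {f : α → ℝ} (hf : BddAbove (range f)) (μ : Measure (ℕ → α))
    [IsFiniteMeasure μ] (n : ℕ) : Integrable (fun ω => exp (pathSum f n ω)) μ := by
  obtain ⟨M, hM⟩ := hf
  refine .of_bound (measurable_pathSum f n).exp.aestronglyMeasurable (exp (n * M))
    (ae_of_all _ fun ω => ?_)
  rw [norm_of_nonneg (exp_pos _).le]
  exact exp_le_exp.2 (pathSum_le (fun z => hM (mem_range_self z)) n ω)

end PathSum

/-- `P x` is the law on paths of the chain started at `x` with transition probabilities `Q`. -/
structure IsPathMarkov {α : Type*} [MeasurableSpace α] (P : α → Measure (ℕ → α))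
    (Q : α → α → ℝ) : Prop where
  start : ∀ x, P x {ω | ω 0 = x} = 1
  step : ∀ x n γ,
    P x (pathCylinder γ (n + 1)) = P x (pathCylinder γ n) * ENNReal.ofReal (Q (γ n) (γ (n + 1)))

namespace IsPathMarkov

variable {α : Type*} [MeasurableSpace α] {P : α → Measure (ℕ → α)} {Q : α → α → ℝ}

lemma measure_pathCylinder_zero (hP : IsPathMarkov P Q) {x : α} {γ : ℕ → α} (h : γ 0 = x) :
    P x (pathCylinder γ 0) = 1 := by
  rw [pathCylinder_zero, h, hP.start]

lemma measure_pathCylinder_eq_zero [MeasurableSingletonClass α]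
    [∀ x, IsProbabilityMeasure (P x)] (hP : IsPathMarkov P Q) {x : α} {γ : ℕ → α} (h : γ 0 ≠ x)
    (n : ℕ) : P x (pathCylinder γ n) = 0 := by
  have hx : MeasurableSet {ω : ℕ → α | ω 0 = x} :=
    (measurableSet_singleton x).preimage (measurable_pi_apply 0)
  have hsub : pathCylinder γ n ⊆ {ω | ω 0 = x}ᶜ := fun ω hω hωx =>
    h (by rw [← hω 0 n.zero_le, hωx])
  exact measure_mono_null hsub ((prob_compl_eq_zero_iff hx).2 (hP.start x))

lemma measure_pathCylinder_add (hP : IsPathMarkov P Q) (x : α) (γ : ℕ → α) (p m : ℕ) :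
    P x (pathCylinder γ (p + m))
      = P x (pathCylinder γ p) * P (γ p) (pathCylinder (pathShift p γ) m) := by
  induction m with
  | zero => rw [add_zero, hP.measure_pathCylinder_zero (x := γ p) rfl, mul_one]
  | succ m ih => rw [← add_assoc, hP.step, ih, hP.step, mul_assoc]; rfl

section Countable

variable [Countable α] [MeasurableSingletonClass α] [∀ x, IsProbabilityMeasure (P x)]

lemma map_pathShift_restrict (hP : IsPathMarkov P Q) (x : α) (γ : ℕ → α) (p : ℕ) :
    ((P x).restrict (pathCylinder γ p)).map (pathShift p)
      = P x (pathCylinder γ p) • P (γ p) := by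
  refine ext_of_generate_finite _ generateFrom_pathCylinders.symm isPiSystem_pathCylinders
    ?_ (by simp [Measure.map_apply (measurable_pathShift p) MeasurableSet.univ])
  rintro _ ⟨δ, m, rfl⟩
  rw [Measure.map_apply (measurable_pathShift p) (measurableSet_pathCylinder δ m),
    Measure.restrict_apply (measurable_pathShift p (measurableSet_pathCylinder δ m)),
    Measure.smul_apply, smul_eq_mul]
  by_cases hδ : δ 0 = γ p
  · have happ : ∀ i ≤ p, pathAppend γ p δ i = γ i := fun i hi => if_pos hi
    have hshift : ∀ i ≤ m, pathShift p (pathAppend γ p δ) i = δ i := by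
      intro i _
      rcases Nat.eq_zero_or_pos i with rfl | hi
      · simpa [pathShift] using (happ p le_rfl).trans hδ.symm
      · simp [pathShift, pathAppend, show ¬ p + i ≤ p by omega]
    rw [pathShift_preimage_pathCylinder_inter hδ, hP.measure_pathCylinder_add,
      pathCylinder_congr happ, happ p le_rfl, pathCylinder_congr hshift]
  · rw [pathShift_preimage_pathCylinder_inter_eq_empty hδ, measure_empty,
      hP.measure_pathCylinder_eq_zero hδ, mul_zero]

lemma setIntegral_comp_pathShift (hP : IsPathMarkov P Q) (x : α) (γ : ℕ → α) (p : ℕ)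
    {g : (ℕ → α) → ℝ} (hg : Measurable g) :
    ∫ ω in pathCylinder γ p, g (pathShift p ω) ∂P x
      = (P x (pathCylinder γ p)).toReal * ∫ ω, g ω ∂P (γ p) := by
  rw [← integral_map (measurable_pathShift p).aemeasurable hg.aestronglyMeasurable,
    hP.map_pathShift_restrict, integral_smul_measure, smul_eq_mul]

lemma setIntegral_exp_pathSum (hP : IsPathMarkov P Q) (f : α → ℝ) (x : α) (γ : ℕ → α)
    (p n : ℕ) :
    ∫ ω in pathCylinder γ p, exp (pathSum f (p + n) ω) ∂P x
      = exp (pathSum f p γ) * (P x (pathCylinder γ p)).toReal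
          * ∫ ω, exp (pathSum f n ω) ∂P (γ p) := by
  rw [setIntegral_congr_fun (measurableSet_pathCylinder γ p) fun ω hω => by
      rw [pathSum_add, pathSum_eq_of_mem_pathCylinder f hω, exp_add],
    integral_const_mul, hP.setIntegral_comp_pathShift x γ p (measurable_pathSum f n).exp,
    mul_assoc]

lemma mul_integral_exp_pathSum_le (hP : IsPathMarkov P Q) {f : α → ℝ} (hf : BddAbove (range f))
    (x : α) (γ : ℕ → α) (p n : ℕ) :
    exp (pathSum f p γ) * (P x (pathCylinder γ p)).toReal * ∫ ω, exp (pathSum f n ω) ∂P (γ p)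
      ≤ ∫ ω, exp (pathSum f (p + n) ω) ∂P x := by
  rw [← hP.setIntegral_exp_pathSum]
  exact setIntegral_le_integral (integrable_exp_pathSum hf _ _)
    (ae_of_all _ fun ω => (exp_pos _).le)

theorem growth_rate_le (hP : IsPathMarkov P Q) {f : α → ℝ} (hf : BddAbove (range f)) {x y : α}
    {p : ℕ} (hxy : P x {ω | ω p = y} ≠ 0) {s t : ℝ}
    (hs : Tendsto (fun n : ℕ => 1 / (n : ℝ) * log (∫ ω, exp (pathSum f n ω) ∂P x)) atTop (𝓝 s))
    (ht : Tendsto (fun n : ℕ => 1 / (n : ℝ) * log (∫ ω, exp (pathSum f n ω) ∂P y)) atTop (𝓝 t)) :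
    t ≤ s := by
  obtain ⟨γ, rfl, hγ⟩ := exists_pathCylinder_measure_ne_zero (P x) hxy
  have hC : 0 < exp (pathSum f p γ) * (P x (pathCylinder γ p)).toReal :=
    mul_pos (exp_pos _) (ENNReal.toReal_pos hγ (measure_ne_top _ _))
  exact le_of_tendsto_log_div_of_mul_le hC
    (fun n => integral_exp_pos (integrable_exp_pathSum hf _ n))
    (hP.mul_integral_exp_pathSum_le hf x γ p) hs ht

end Countable

end IsPathMarkov

theorem growth_rate_independent_of_start_general
    (St : Type*) [Countable St]
    [MeasurableSpace St] [MeasurableSingletonClass St]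
    (Pm : St → Measure (ℕ → St)) [∀ x, IsProbabilityMeasure (Pm x)]
    (Ptrans : St → St → ℝ)
    (hstart : ∀ x, Pm x {ω | ω 0 = x} = 1)
    (hMarkov : ∀ x, ∀ (n : ℕ) (γ : ℕ → St),
      Pm x {ω | ∀ i ≤ n + 1, ω i = γ i}
        = Pm x {ω | ∀ i ≤ n, ω i = γ i} * ENNReal.ofReal (Ptrans (γ n) (γ (n + 1))))
    -- irreducibility and recurrence
    (hirr : ∀ x y : St, ∃ n : ℕ, 0 < Pm x {ω | ω n = y})
    -- the bounded function f, with ‖f‖_∞ < (1/2) min(κ(x), κ(y))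
    (f : St → ℝ) (hfbdd : ∃ M, ∀ z, |f z| ≤ M)
    (x y : St)
    -- the growth rates c(x,f) and c(y,f)
    (cx cy : ℝ)
    (hcx : Tendsto (fun n : ℕ => (1 / (n : ℝ)) *
        Real.log (∫ ω, Real.exp (∑ i ∈ Finset.range n, f (ω i)) ∂Pm x))
      atTop (𝓝 cx))
    (hcy : Tendsto (fun n : ℕ => (1 / (n : ℝ)) *
        Real.log (∫ ω, Real.exp (∑ i ∈ Finset.range n, f (ω i)) ∂Pm y))
      atTop (𝓝 cy)) :
    cx = cy := by
  have hP : IsPathMarkov Pm Ptrans := ⟨hstart, hMarkov⟩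
  obtain ⟨M, hM⟩ := hfbdd
  have hf : BddAbove (range f) := ⟨M, forall_mem_range.2 fun z => le_of_abs_le (hM z)⟩
  exact le_antisymm (hP.growth_rate_le hf (hirr y x).choose_spec.ne' hcy hcx)
    (hP.growth_rate_le hf (hirr x y).choose_spec.ne' hcx hcy)

/-- for an irreducible recurrent Markov chain, the exponential growth rate
`c(x,f) = lim (1/n) log E_x[e^{∑_{i<n} f(S_i)}]` does not depend on the starting point:
if `‖f‖_∞ < (1/2) min(κ(x), κ(y))` then `c(x,f) = c(y,f)`. -/
theorem growth_rate_independent_of_start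
    (St : Type*) [Countable St] [Nonempty St]
    [MeasurableSpace St] [MeasurableSingletonClass St]
    (Pm : St → Measure (ℕ → St)) [∀ x, IsProbabilityMeasure (Pm x)]
    (Ptrans : St → St → ℝ)
    (hstart : ∀ x, Pm x {ω | ω 0 = x} = 1)
    (hMarkov : ∀ x, ∀ (n : ℕ) (γ : ℕ → St),
      Pm x {ω | ∀ i ≤ n + 1, ω i = γ i}
        = Pm x {ω | ∀ i ≤ n, ω i = γ i} * ENNReal.ofReal (Ptrans (γ n) (γ (n + 1))))
    -- irreducibility and recurrence
    (hirr : ∀ x y : St, ∃ n : ℕ, 0 < Pm x {ω | ω n = y})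
    (hrec : ∀ x : St, ∀ᵐ ω ∂Pm x, ∃ n : ℕ, 1 ≤ n ∧ ω n = x)
    -- first return times and the exponential-moment thresholds κ(x)
    (τ : St → (ℕ → St) → ℕ) (hτ : ∀ x ω, τ x ω = sInf {n : ℕ | 1 ≤ n ∧ ω n = x})
    (κ : St → ℝ)
    (hκ : ∀ x, κ x = sSup {α : ℝ | 0 < α ∧
      Integrable (fun ω => Real.exp (α * τ x ω)) (Pm x)})
    -- the bounded function f, with ‖f‖_∞ < (1/2) min(κ(x), κ(y))
    (f : St → ℝ) (hfbdd : ∃ M, ∀ z, |f z| ≤ M)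
    (x y : St)
    (hfκ : (⨆ z : St, |f z|) < (1 / 2) * min (κ x) (κ y))
    -- the growth rates c(x,f) and c(y,f)
    (cx cy : ℝ)
    (hcx : Tendsto (fun n : ℕ => (1 / (n : ℝ)) *
        Real.log (∫ ω, Real.exp (∑ i ∈ Finset.range n, f (ω i)) ∂Pm x))
      atTop (𝓝 cx))
    (hcy : Tendsto (fun n : ℕ => (1 / (n : ℝ)) *
        Real.log (∫ ω, Real.exp (∑ i ∈ Finset.range n, f (ω i)) ∂Pm y))
      atTop (𝓝 cy)) :
    cx = cy :=
  growth_rate_independent_of_start_general St Pm Ptrans hstart hMarkov hirr f hfbdd x y cx cy hcx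
    hcy
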